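/- arXiv:math/0405394 — 5 statements merged into one kernel-verified Lean document; each statement's English description precedes it below -/
import Mathlib

section
/- Let φ = Σ_{i=1}^k ω_i ⊗ v_i be a finite-rank endomorphism of a real vector space V, and M the k×k matrix with M_{ij} = ω_i(v_j). Then the formal power series exp(−Σ_{n≥1} tr(φ^n) z^n / n) equals det(Id − zM) in ℝ[[z]]. -/
/-!
Write `φ = q ∘ p` with `p = (ωᵢ)ᵢ : V → ℝᵏ` and `q c = ∑ cᵢ vᵢ`. Then `p ∘ q` is the matrix `M`,
and cyclicity of the trace gives `tr φⁿ = tr (p ∘ q)ⁿ = tr Mⁿ`. On the other side, Jacobi's formula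
`(det A)' = tr (adj A · A')` for `A = 1 - z M`, whose inverse is `∑ Mⁿ zⁿ`, gives
`(det A)' = -(∑ tr Mⁿ⁺¹ zⁿ) · det A`. So `D` and `det A` solve the same linear differential
equation with constant term `1`; as `det A` is a unit, `D / det A` has derivative `0`, hence is `1`.
-/

open PowerSeries

/-- The trace of a finite-rank endomorphism: the trace of its restriction to its image. -/
noncomputable def traceFiniteRank {V : Type*} [AddCommGroup V] [Module ℝ V]
    (ψ : V →ₗ[ℝ] V) : ℝ :=
  LinearMap.trace ℝ (LinearMap.range ψ)
    (ψ.restrict (fun x _ => LinearMap.mem_range_self ψ x))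

namespace Derivation

section

variable {R A M : Type*} [CommSemiring R] [CommSemiring A] [AddCommMonoid M] [Algebra R A]
  [Module A M] [Module R M] (D : Derivation R A M)

theorem map_prod {ι : Type*} [DecidableEq ι] (s : Finset ι) (f : ι → A) :
    D (∏ i ∈ s, f i) = ∑ i ∈ s, (∏ j ∈ s.erase i, f j) • D (f i) := by
  induction s using Finset.induction_on with
  | empty => simp
  | insert a s ha ih =>
    rw [Finset.prod_insert ha, leibniz, ih, Finset.sum_insert ha, Finset.erase_insert ha,
      Finset.smul_sum, add_comm]
    congr 1
    refine Finset.sum_congr rfl fun i hi => ?_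
    rw [Finset.erase_insert_of_ne (ne_of_mem_of_not_mem hi ha).symm,
      Finset.prod_insert fun h => ha (Finset.mem_of_mem_erase h), smul_smul]

end

section

variable {R S : Type*} [CommRing R] [CommRing S] [Algebra R S] (D : Derivation R S S)
  {n : Type*} [Fintype n] [DecidableEq n]

theorem map_det (A : Matrix n n S) :
    D A.det = ∑ i, (A.updateCol i fun r => D (A r i)).det := by
  simp only [Matrix.det_apply', map_sum, leibniz, map_intCast, mul_zero, add_zero, map_prod,
    smul_eq_mul, Finset.mul_sum]
  rw [Finset.sum_comm]
  refine Finset.sum_congr rfl fun i _ => Finset.sum_congr rfl fun σ _ => ?_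
  rw [← Finset.prod_erase_mul _ _ (Finset.mem_univ i), Matrix.updateCol_self,
    Finset.prod_congr rfl fun j hj => Matrix.updateCol_ne (Finset.ne_of_mem_erase hj)]

theorem map_det_eq_trace_adjugate_mul (A : Matrix n n S) :
    D A.det = (A.adjugate * A.map D).trace := by
  simp only [map_det, ← Matrix.cramer_apply, Matrix.cramer_eq_adjugate_mulVec, Matrix.trace,
    Matrix.diag, Matrix.mul_apply, Matrix.mulVec, dotProduct, Matrix.map_apply]

end

end Derivation

theorem Matrix.adjugate_eq_det_smul_of_mul_eq_one {n α : Type*} [Fintype n] [DecidableEq n]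
    [CommRing α] {A B : Matrix n n α} (h : A * B = 1) : A.adjugate = A.det • B := by
  rw [← mul_one A.adjugate, ← h, ← mul_assoc, Matrix.adjugate_mul, Matrix.smul_mul, one_mul]

namespace PowerSeries

variable {R : Type*} [CommRing R]

theorem eq_of_derivative_eq_mul_self [IsAddTorsionFree R] {T f g : R⟦X⟧} (hg : IsUnit g)
    (hf : d⁄dX R f = T * f) (hg' : d⁄dX R g = T * g)
    (h0 : constantCoeff f = constantCoeff g) : f = g := by
  obtain ⟨u, rfl⟩ := hg
  rw [← Units.mul_inv_eq_one]
  refine derivative.ext ?_ ?_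
  · rw [Derivation.leibniz, derivative_inv, hf, hg', Derivation.map_one_eq_zero, smul_eq_mul,
      smul_eq_mul]
    linear_combination (-(f * ↑u⁻¹ * T)) * u.inv_mul
  · rw [map_mul, h0, ← map_mul, Units.mul_inv, map_one]

variable {n : Type*} [Fintype n] [DecidableEq n]

noncomputable def matrixGeomSeries (M : Matrix n n R) : Matrix n n R⟦X⟧ :=
  Matrix.of fun i j => mk fun k => (M ^ k) i j

theorem one_sub_X_smul_mul_matrixGeomSeries (M : Matrix n n R) :
    (1 - (X : R⟦X⟧) • M.map C) * matrixGeomSeries M = 1 := by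
  rw [sub_mul, one_mul, sub_eq_iff_eq_add, Matrix.smul_mul]
  ext i j (_ | k)
  · by_cases hij : i = j <;> simp [matrixGeomSeries, hij]
  · simp [matrixGeomSeries, Matrix.one_apply, apply_ite, coeff_one, pow_succ', Matrix.mul_apply,
      coeff_C_mul]

theorem trace_matrixGeomSeries_mul (M : Matrix n n R) :
    (matrixGeomSeries M * M.map C).trace = mk fun k => (M ^ (k + 1)).trace := by
  ext k
  simp [matrixGeomSeries, Matrix.trace, Matrix.mul_apply, pow_succ]

theorem constantCoeff_det_one_sub_X_smul (M : Matrix n n R) :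
    constantCoeff (1 - (X : R⟦X⟧) • M.map C).det = 1 := by
  have h : (1 - (X : R⟦X⟧) • M.map C).map constantCoeff = 1 := by
    ext i j
    by_cases hij : i = j <;> simp [Matrix.one_apply, hij]
  rw [RingHom.map_det, RingHom.mapMatrix_apply, h, Matrix.det_one]

theorem derivative_det_one_sub_X_smul (M : Matrix n n R) :
    d⁄dX R (1 - (X : R⟦X⟧) • M.map C).det
      = -(mk fun k => (M ^ (k + 1)).trace) * (1 - (X : R⟦X⟧) • M.map C).det := by
  have hA : (1 - (X : R⟦X⟧) • M.map C).map (d⁄dX R) = -M.map C := by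
    ext i j
    by_cases hij : i = j <;> simp [hij]
  rw [Derivation.map_det_eq_trace_adjugate_mul, hA,
    Matrix.adjugate_eq_det_smul_of_mul_eq_one (one_sub_X_smul_mul_matrixGeomSeries M),
    Matrix.smul_mul, Matrix.trace_smul, Matrix.mul_neg, Matrix.trace_neg,
    trace_matrixGeomSeries_mul, smul_eq_mul, mul_neg, neg_mul, mul_comm]

end PowerSeries

theorem LinearMap.comp_pow_comp_comm {R M N : Type*} [Semiring R] [AddCommMonoid M] [Module R M]
    [AddCommMonoid N] [Module R N] (f : N →ₗ[R] M) (g : M →ₗ[R] N) (m : ℕ) :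
    f ∘ₗ ((g ∘ₗ f) ^ m) = ((f ∘ₗ g) ^ m) ∘ₗ f := by
  induction m with
  | zero => rfl
  | succ m ih => simp only [pow_succ, Module.End.mul_eq_comp, ← LinearMap.comp_assoc, ih]

section TraceFiniteRank

variable {V W : Type*} [AddCommGroup V] [Module ℝ V] [AddCommGroup W] [Module ℝ W]

theorem traceFiniteRank_eq_trace_restrict (ψ : V →ₗ[ℝ] V) (U : Submodule ℝ V)
    [FiniteDimensional ℝ U] (h : ∀ x, ψ x ∈ U) :
    traceFiniteRank ψ = LinearMap.trace ℝ U (ψ.restrict fun x _ => h x) := by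
  have hle : LinearMap.range ψ ≤ U := LinearMap.range_le_iff_comap.mpr (by ext x; simp [h])
  have : FiniteDimensional ℝ (LinearMap.range ψ) := Submodule.finiteDimensional_of_le hle
  let c : U →ₗ[ℝ] LinearMap.range ψ := (ψ ∘ₗ U.subtype).codRestrict _ fun x => ⟨x, rfl⟩
  change LinearMap.trace ℝ _ (c ∘ₗ Submodule.inclusion hle) =
    LinearMap.trace ℝ _ (Submodule.inclusion hle ∘ₗ c)
  exact LinearMap.trace_comp_comm' _ _

theorem traceFiniteRank_comp [FiniteDimensional ℝ W] (f : W →ₗ[ℝ] V) (g : V →ₗ[ℝ] W) :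
    traceFiniteRank (f ∘ₗ g) = LinearMap.trace ℝ W (g ∘ₗ f) := by
  rw [traceFiniteRank_eq_trace_restrict (f ∘ₗ g) (LinearMap.range f) fun x => ⟨g x, rfl⟩]
  exact LinearMap.trace_comp_comm' (g ∘ₗ (LinearMap.range f).subtype) f.rangeRestrict

theorem traceFiniteRank_comp_pow_succ [FiniteDimensional ℝ W] (f : W →ₗ[ℝ] V)
    (g : V →ₗ[ℝ] W) (m : ℕ) :
    traceFiniteRank ((f ∘ₗ g) ^ (m + 1)) = LinearMap.trace ℝ W ((g ∘ₗ f) ^ (m + 1)) := by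
  rw [pow_succ, Module.End.mul_eq_comp, ← LinearMap.comp_assoc, ← LinearMap.comp_pow_comp_comm,
    LinearMap.comp_assoc, traceFiniteRank_comp, LinearMap.comp_assoc, pow_succ,
    Module.End.mul_eq_comp]

theorem traceFiniteRank_pow_succ_sum_smulRight {k : ℕ} (ω : Fin k → V →ₗ[ℝ] ℝ) (v : Fin k → V)
    (m : ℕ) :
    traceFiniteRank ((∑ i, (ω i).smulRight (v i)) ^ (m + 1))
      = ((Matrix.of fun i j => ω i (v j)) ^ (m + 1)).trace := by
  have hφ : ∑ i, (ω i).smulRight (v i) = Fintype.linearCombination ℝ v ∘ₗ LinearMap.pi ω := by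
    ext x; simp [Fintype.linearCombination_apply]
  have hM : LinearMap.pi ω ∘ₗ Fintype.linearCombination ℝ v
      = Matrix.toLin' (Matrix.of fun i j => ω i (v j)) := by
    ext c i; simp [Fintype.linearCombination_apply, Matrix.mulVec, dotProduct, Pi.single_apply]
  rw [hφ, traceFiniteRank_comp_pow_succ, hM, ← Matrix.toLin'_pow, Matrix.trace_toLin'_eq]

end TraceFiniteRank

/-- `D` stands for `exp(−Σ_{n≥1} tr(φⁿ) zⁿ/n)`, characterized by `D(0) = 1` and
`D' = −(Σ_{n≥1} tr(φⁿ) z^{n−1}) · D`. -/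
theorem exp_neg_trace_series_eq_det
    (V : Type*) [AddCommGroup V] [Module ℝ V] (k : ℕ)
    (ω : Fin k → (V →ₗ[ℝ] ℝ)) (v : Fin k → V) (φ : V →ₗ[ℝ] V)
    (hφ : φ = ∑ i, (ω i).smulRight (v i))
    (D : PowerSeries ℝ) (hD0 : PowerSeries.constantCoeff D = 1)
    (hDode : PowerSeries.derivativeFun D
      = -(PowerSeries.mk fun m => traceFiniteRank (φ ^ (m + 1))) * D) :
    D = Matrix.det ((1 : Matrix (Fin k) (Fin k) (PowerSeries ℝ)) -
        (PowerSeries.X : PowerSeries ℝ) • (Matrix.of fun i j => PowerSeries.C (ω i (v j)))) := by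
  subst hφ
  set M : Matrix (Fin k) (Fin k) ℝ := Matrix.of fun i j => ω i (v j)
  change D = (1 - (X : ℝ⟦X⟧) • M.map C).det
  simp only [traceFiniteRank_pow_succ_sum_smulRight] at hDode
  have hdet0 := constantCoeff_det_one_sub_X_smul M
  exact eq_of_derivative_eq_mul_self (isUnit_iff_constantCoeff.mpr (hdet0 ▸ isUnit_one)) hDode
    (derivative_det_one_sub_X_smul M) (hD0.trans hdet0.symm)
end

section
/- Let χ, φ, ψ be commuting finite-rank endomorphisms of a short exact sequence 0 → U → V → W → 0 as above. Then in ℝ[[z]] the determinant power series satisfy D_φ(z) = D_χ(z)·D_ψ(z), where D_α(z) = exp(−Σ_{n≥1} tr(α^n) z^n / n). -/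
/-- `D` is the determinant power series `D_α(z) = exp(−Σ_{n≥1} tr(αⁿ) zⁿ/n)` of the
finite-rank endomorphism `α`; in characteristic zero this is uniquely characterized
by `D(0) = 1` and the differential equation `D' = −(Σ_{n≥1} tr(αⁿ) z^{n−1})·D`. -/
def IsDetSeries {V : Type*} [AddCommGroup V] [Module ℝ V]
    (α : V →ₗ[ℝ] V) (D : PowerSeries ℝ) : Prop :=
  PowerSeries.constantCoeff (R := ℝ) D = 1 ∧
  PowerSeries.derivativeFun D
    = -(PowerSeries.mk fun m => traceFiniteRank (α ^ (m + 1))) * D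

/-! Traces are additive along short exact sequences of finite free modules, by a block-triangular
basis adapted to the submodule. Restricting `0 → U → V → W → 0` to the finite-dimensional
subspace `range φ` carries this over to the traces of the finite-rank maps `χ, φ, ψ` and, since
the squares commute for all powers, to the series `Σ tr(αⁿ⁺¹) zⁿ`. Finally `D ↦ D' / D` is
injective on series with constant term `1`, and `Dχ Dψ` has logarithmic derivative the sum of
those of `Dχ` and `Dψ`. -/

namespace LinearMap

open Module

theorem trace_eq_trace_restrict_add_trace_mapQ {R V : Type*} [CommRing R] [AddCommGroup V]
    [Module R V] (N : Submodule R V) [Free R N] [Module.Finite R N] [Free R (V ⧸ N)]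
    [Module.Finite R (V ⧸ N)] (f : V →ₗ[R] V) (hf : N ≤ N.comap f) :
    trace R V f = trace R N (f.restrict hf) + trace R (V ⧸ N) (N.mapQ N f hf) := by
  classical
  let bN := Free.chooseBasis R N
  let bQ := Free.chooseBasis R (V ⧸ N)
  rw [trace_eq_matrix_trace R (bN.sumQuot bQ), trace_eq_matrix_trace R bN,
    trace_eq_matrix_trace R bQ]
  simp only [Matrix.trace, Matrix.diag, Fintype.sum_sum_type, toMatrix_apply]
  congr 1
  · refine Finset.sum_congr rfl fun i _ => ?_
    rw [Basis.sumQuot_inl, Basis.sumQuot_repr_inl_of_mem _ _ (f (bN i)) (hf (bN i).2 :)]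
    rfl
  · refine Finset.sum_congr rfl fun j _ => ?_
    rw [Basis.sumQuot_repr_inr, ← Basis.sumQuot_inr bN bQ j, Submodule.mkQ_apply,
      Submodule.mapQ_apply]

theorem trace_eq_trace_of_comp_eq {R M N : Type*} [CommRing R] [AddCommGroup M] [Module R M]
    [AddCommGroup N] [Module R N] (e : M ≃ₗ[R] N) {f : M →ₗ[R] M} {g : N →ₗ[R] N}
    (h : e ∘ₗ f = g ∘ₗ e) : trace R M f = trace R N g := by
  rw [← trace_conj' f e, LinearEquiv.conj_apply, h]
  congr 1
  ext
  simp

theorem trace_eq_add_of_exact {R U V W : Type*} [CommRing R] [AddCommGroup U] [Module R U]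
    [AddCommGroup V] [Module R V] [AddCommGroup W] [Module R W]
    [Free R U] [Module.Finite R U] [Free R W] [Module.Finite R W]
    {i : U →ₗ[R] V} {p : V →ₗ[R] W} (hi : Function.Injective i) (hp : Function.Surjective p)
    (hexact : Function.Exact i p) {fU : U →ₗ[R] U} {fV : V →ₗ[R] V} {fW : W →ₗ[R] W}
    (hi_comm : fV ∘ₗ i = i ∘ₗ fU) (hp_comm : p ∘ₗ fV = fW ∘ₗ p) :
    trace R V fV = trace R U fU + trace R W fW := by
  let eU := LinearEquiv.ofInjective i hi
  let eW := hexact.linearEquivOfSurjective hp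
  have : Free R (range i) := .of_equiv eU
  have : Module.Finite R (range i) := .equiv eU
  have : Free R (V ⧸ range i) := .of_equiv eW.symm
  have : Module.Finite R (V ⧸ range i) := .equiv eW.symm
  have hinv : range i ≤ (range i).comap fV := by
    rintro _ ⟨u, rfl⟩
    exact ⟨fU u, (congr($hi_comm u)).symm⟩
  have hU : eU.toLinearMap ∘ₗ fU = fV.restrict hinv ∘ₗ eU.toLinearMap := by
    ext u
    simpa [eU] using congr($hi_comm u).symm
  have hW : eW.toLinearMap ∘ₗ (range i).mapQ (range i) fV hinv = fW ∘ₗ eW.toLinearMap := by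
    ext v
    exact congr($hp_comm v)
  rw [trace_eq_trace_restrict_add_trace_mapQ (range i) fV hinv,
    ← trace_eq_trace_of_comp_eq eU hU, trace_eq_trace_of_comp_eq eW hW]

end LinearMap

open LinearMap

theorem traceFiniteRank_eq_trace_restrict_s5 {V : Type*} [AddCommGroup V] [Module ℝ V]
    (α : V →ₗ[ℝ] V) (T : Submodule ℝ V) [FiniteDimensional ℝ T] (hT : ∀ x, α x ∈ T) :
    traceFiniteRank α = trace ℝ T (α.restrict fun x _ => hT x) := by
  have hle : range α ≤ T := by
    rintro _ ⟨x, rfl⟩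
    exact hT x
  rw [← trace_restrict_eq_of_forall_mem (Submodule.comap T.subtype (range α))
    (α.restrict fun x _ => hT x) fun x => mem_range_self α x]
  exact trace_eq_trace_of_comp_eq (Submodule.comapSubtypeEquivOfLe hle).symm rfl

theorem traceFiniteRank_eq_add_of_exact {U V W : Type*} [AddCommGroup U] [Module ℝ U]
    [AddCommGroup V] [Module ℝ V] [AddCommGroup W] [Module ℝ W]
    {i : U →ₗ[ℝ] V} {p : V →ₗ[ℝ] W} (hi : Function.Injective i) (hp : Function.Surjective p)
    (hexact : Function.Exact i p) {χ : U →ₗ[ℝ] U} {φ : V →ₗ[ℝ] V} {ψ : W →ₗ[ℝ] W}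
    (hi_comm : φ ∘ₗ i = i ∘ₗ χ) (hp_comm : p ∘ₗ φ = ψ ∘ₗ p)
    [FiniteDimensional ℝ (range φ)] :
    traceFiniteRank φ = traceFiniteRank χ + traceFiniteRank ψ := by
  -- restrict the sequence to `0 → i⁻¹(range φ) → range φ → range ψ → 0`
  set S := range φ
  set T := S.comap i
  have hχT : ∀ u, χ u ∈ T := fun u => ⟨i u, congr($hi_comm u)⟩
  have hpS : ∀ v ∈ S, p v ∈ range ψ := by
    rintro _ ⟨v, rfl⟩
    exact ⟨p v, congr($hp_comm v).symm⟩
  let i' : T →ₗ[ℝ] S := i.restrict fun _ hu => hu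
  let p' : S →ₗ[ℝ] range ψ := p.restrict hpS
  have hi' : Function.Injective i' := fun u u' h => Subtype.ext (hi congr(($h : V)))
  have : FiniteDimensional ℝ T := .of_injective i' hi'
  have hp' : Function.Surjective p' := by
    rintro ⟨_, w, rfl⟩
    obtain ⟨v, rfl⟩ := hp w
    exact ⟨⟨φ v, mem_range_self φ v⟩, Subtype.ext congr($hp_comm v)⟩
  have : FiniteDimensional ℝ (range ψ) := .of_surjective p' hp'
  have hexact' : Function.Exact i' p' := by
    rintro ⟨v, hv⟩
    constructor
    · intro h
      obtain ⟨u, rfl⟩ := (hexact v).mp congr(($h : W))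
      exact ⟨⟨u, hv⟩, rfl⟩
    · rintro ⟨u, h⟩
      exact Subtype.ext ((hexact v).mpr ⟨u, congr(($h : V))⟩)
  rw [traceFiniteRank_eq_trace_restrict_s5 χ T hχT]
  exact trace_eq_add_of_exact hi' hp' hexact' (by ext; exact congr($hi_comm _))
    (by ext; exact congr($hp_comm _))

namespace PowerSeries

theorem eq_zero_of_derivative_eq_mul {R : Type*} [CommRing R] [IsAddTorsionFree R]
    {f E : R⟦X⟧} (hE : d⁄dX R E = f * E) (h0 : constantCoeff E = 0) : E = 0 := by
  ext n
  induction n using Nat.strong_induction_on with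
  | _ n ih =>
    cases n with
    | zero => simpa using h0
    | succ n =>
      have hcoeff := congr(coeff n $hE)
      rw [coeff_derivative, coeff_mul, Finset.sum_eq_zero fun x hx => by
        rw [ih x.2 (Finset.Nat.antidiagonal.snd_lt hx), map_zero, mul_zero]] at hcoeff
      have hsmul : (n + 1) • coeff (n + 1) E = 0 := by
        rwa [nsmul_eq_mul', Nat.cast_succ]
      simpa using (smul_eq_zero.mp hsmul).resolve_left n.succ_ne_zero

end PowerSeries

open PowerSeries

noncomputable def traceSeries {V : Type*} [AddCommGroup V] [Module ℝ V] (α : V →ₗ[ℝ] V) :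
    PowerSeries ℝ :=
  PowerSeries.mk fun m => traceFiniteRank (α ^ (m + 1))

theorem traceSeries_eq_add_of_exact {U V W : Type*} [AddCommGroup U] [Module ℝ U]
    [AddCommGroup V] [Module ℝ V] [AddCommGroup W] [Module ℝ W]
    {i : U →ₗ[ℝ] V} {p : V →ₗ[ℝ] W} (hi : Function.Injective i) (hp : Function.Surjective p)
    (hexact : Function.Exact i p) {χ : U →ₗ[ℝ] U} {φ : V →ₗ[ℝ] V} {ψ : W →ₗ[ℝ] W}
    (hi_comm : φ ∘ₗ i = i ∘ₗ χ) (hp_comm : p ∘ₗ φ = ψ ∘ₗ p)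
    [FiniteDimensional ℝ (range φ)] :
    traceSeries φ = traceSeries χ + traceSeries ψ := by
  refine PowerSeries.ext fun m => ?_
  have : FiniteDimensional ℝ (range (φ ^ (m + 1))) :=
    Submodule.finiteDimensional_of_le (S₂ := range φ) <| by
      rw [pow_succ']
      exact range_comp_le_range _ _
  simp only [traceSeries, map_add, coeff_mk]
  exact traceFiniteRank_eq_add_of_exact hi hp hexact
    (Module.End.commute_pow_left_of_commute hi_comm _)
    (Module.End.commute_pow_left_of_commute hp_comm.symm _).symm

section IsDetSeries

variable {V : Type*} [AddCommGroup V] [Module ℝ V] {α : V →ₗ[ℝ] V} {A B : PowerSeries ℝ}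

theorem isDetSeries_iff :
    IsDetSeries α A ↔ constantCoeff A = 1 ∧ d⁄dX ℝ A = -traceSeries α * A :=
  Iff.rfl

theorem IsDetSeries.unique (hA : IsDetSeries α A) (hB : IsDetSeries α B) : A = B := by
  rw [isDetSeries_iff] at hA hB
  refine sub_eq_zero.mp (eq_zero_of_derivative_eq_mul (f := -traceSeries α) ?_ ?_)
  · rw [map_sub, hA.2, hB.2, mul_sub]
  · rw [map_sub, hA.1, hB.1, sub_self]

theorem IsDetSeries.mul {U W : Type*} [AddCommGroup U] [Module ℝ U] [AddCommGroup W]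
    [Module ℝ W] {β : U →ₗ[ℝ] U} {γ : W →ₗ[ℝ] W} (hA : IsDetSeries α A) (hB : IsDetSeries β B)
    (htrace : traceSeries γ = traceSeries α + traceSeries β) : IsDetSeries γ (A * B) := by
  rw [isDetSeries_iff] at hA hB ⊢
  refine ⟨by rw [map_mul, hA.1, hB.1, mul_one], ?_⟩
  rw [Derivation.leibniz, hA.2, hB.2, htrace, smul_eq_mul, smul_eq_mul]
  ring

end IsDetSeries

theorem det_series_multiplicative_of_ses_general
    (U V W : Type*) [AddCommGroup U] [Module ℝ U] [AddCommGroup V] [Module ℝ V]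
    [AddCommGroup W] [Module ℝ W]
    (i : U →ₗ[ℝ] V) (p : V →ₗ[ℝ] W)
    (hi : Function.Injective i) (hp : Function.Surjective p)
    (hexact : LinearMap.range i = LinearMap.ker p)
    (χ : U →ₗ[ℝ] U) (φ : V →ₗ[ℝ] V) (ψ : W →ₗ[ℝ] W)
    (hcomm₁ : φ ∘ₗ i = i ∘ₗ χ) (hcomm₂ : p ∘ₗ φ = ψ ∘ₗ p)
    (hφ : FiniteDimensional ℝ (LinearMap.range φ))
    (Dχ Dφ Dψ : PowerSeries ℝ)
    (hDχ : IsDetSeries χ Dχ) (hDφ : IsDetSeries φ Dφ) (hDψ : IsDetSeries ψ Dψ) :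
    Dφ = Dχ * Dψ :=
  hDφ.unique <| hDχ.mul hDψ <|
    traceSeries_eq_add_of_exact hi hp (exact_iff.mpr hexact.symm) hcomm₁ hcomm₂

/-- For commuting finite-rank endomorphisms `χ, φ, ψ` of a short exact
sequence `0 → U → V → W → 0`, the determinant power series satisfy
`D_φ(z) = D_χ(z)·D_ψ(z)` in `ℝ[[z]]`. -/
theorem det_series_multiplicative_of_ses
    (U V W : Type*) [AddCommGroup U] [Module ℝ U] [AddCommGroup V] [Module ℝ V]
    [AddCommGroup W] [Module ℝ W]
    (i : U →ₗ[ℝ] V) (p : V →ₗ[ℝ] W)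
    (hi : Function.Injective i) (hp : Function.Surjective p)
    (hexact : LinearMap.range i = LinearMap.ker p)
    (χ : U →ₗ[ℝ] U) (φ : V →ₗ[ℝ] V) (ψ : W →ₗ[ℝ] W)
    (hcomm₁ : φ ∘ₗ i = i ∘ₗ χ) (hcomm₂ : p ∘ₗ φ = ψ ∘ₗ p)
    (hχ : FiniteDimensional ℝ (LinearMap.range χ))
    (hφ : FiniteDimensional ℝ (LinearMap.range φ))
    (hψ : FiniteDimensional ℝ (LinearMap.range ψ))
    (Dχ Dφ Dψ : PowerSeries ℝ)
    (hDχ : IsDetSeries χ Dχ) (hDφ : IsDetSeries φ Dφ) (hDψ : IsDetSeries ψ Dψ) :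
    Dφ = Dχ * Dψ :=
  det_series_multiplicative_of_ses_general U V W i p hi hp hexact χ φ ψ hcomm₁ hcomm₂ hφ Dχ Dφ Dψ
    hDχ hDφ hDψ
end

section
/- Let φ : V → V be a finite-rank endomorphism of a real vector space, v ∈ V, and ξ ∈ V*. Then there exists an eigenvalue λ of φ (restricted to its image, or λ = 0) such that limsup_{n→∞} |ξ(φ^n(v))|^{1/n} = |λ|. -/
/-!
Complexify `φ` on the finite-dimensional invariant subspace `W = range φ`. Splitting `φ v` into
generalized eigenvectors shows that `ξ (φⁿ v)` is eventually an exponential polynomial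
`∑ p_λ(n) λⁿ` whose frequencies `λ` are eigenvalues. The `n`-th roots of such a sequence have
limsup equal to the largest `|λ|` with `p_λ ≠ 0` (or `0` if there is none). The upper bound is
polynomial-times-geometric decay. For the lower bound, the operators `c ↦ (n ↦ c (n+1) - a c n)`
preserve `O(sⁿ)` bounds, remove the frequency `a` after `deg p_a + 1` steps and keep every other
`p_λ` nonzero; removing all frequencies but `μ` leaves a single term `p(n) μⁿ`, which is not
`O(sⁿ)` for `s < |μ|`.
-/

open Filter Polynomial Asymptotics TensorProduct

noncomputable section

section Asymptotics

theorem Polynomial.isLittleO_eval_natCast_mul_pow {R : Type*} [NormedRing R] (q : R[X]) {l : R}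
    {ρ : ℝ} (h : ‖l‖ < ρ) : (fun n : ℕ => q.eval (n : R) * l ^ n) =o[atTop] (ρ ^ ·) := by
  simp_rw [eval_eq_sum_range, Finset.sum_mul, mul_assoc, ← Finset.sum_fn]
  exact IsLittleO.sum fun i _ =>
    (isLittleO_pow_const_mul_const_pow_const_pow_of_norm_lt i h).const_mul_left _

theorem Polynomial.isBigO_one_eval_natCast {𝕜 : Type*} [RCLike 𝕜] {q : 𝕜[X]} (hq : q ≠ 0) :
    (fun _ : ℕ => (1 : 𝕜)) =O[atTop] (fun n : ℕ => q.eval (n : 𝕜)) := by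
  rcases le_or_gt q.degree 0 with hdeg | hdeg
  · rw [eq_C_of_degree_le_zero hdeg] at hq ⊢
    simpa using isBigO_const_const (1 : 𝕜) (by simpa using hq) (atTop : Filter ℕ)
  · have := q.tendsto_norm_atTop hdeg (l := atTop) (z := ((↑) : ℕ → 𝕜))
      (by simpa using tendsto_natCast_atTop_atTop (R := ℝ))
    refine IsBigO.of_bound 1 ((this.eventually_ge_atTop 1).mono fun n hn => ?_)
    simpa using hn

theorem Polynomial.not_isBigO_eval_natCast_mul_pow {𝕜 : Type*} [RCLike 𝕜] {q : 𝕜[X]} (hq : q ≠ 0)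
    {μ : 𝕜} {s : ℝ} (hs : 0 ≤ s) (hsμ : s < ‖μ‖) :
    ¬ (fun n : ℕ => q.eval (n : 𝕜) * μ ^ n) =O[atTop] (s ^ ·) := by
  intro h
  have hμ : (fun n : ℕ => μ ^ n) =O[atTop] (fun n => q.eval (n : 𝕜) * μ ^ n) := by
    simpa using (isBigO_one_eval_natCast hq).mul (isBigO_refl (fun n : ℕ => μ ^ n) atTop)
  have hnorm : (fun n : ℕ => ‖μ‖ ^ n) =O[atTop] (fun n : ℕ => μ ^ n) :=
    IsBigO.of_bound 1 (Eventually.of_forall fun n => by simp)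
  have hμ0 : μ ≠ 0 := norm_pos_iff.mp (hs.trans_lt hsμ)
  exact isLittleO_irrefl (Eventually.of_forall fun n => pow_ne_zero n hμ0).frequently
    ((hμ.trans h).trans_isLittleO ((isLittleO_pow_pow_of_lt_left hs hsμ).trans_isBigO hnorm))

theorem Asymptotics.IsBigO.comp_succ_sub_mul {𝕜 : Type*} [NormedRing 𝕜] {c : ℕ → 𝕜} {s : ℝ}
    (hc : c =O[atTop] (s ^ ·)) (a : 𝕜) :
    (fun n => c (n + 1) - a * c n) =O[atTop] (s ^ ·) := by
  have hpow : (fun n : ℕ => s ^ (n + 1)) =O[atTop] (s ^ ·) := by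
    simpa only [pow_succ'] using (isBigO_refl (s ^ ·) atTop).const_mul_left s
  exact ((hc.comp_tendsto (tendsto_add_atTop_nat 1)).trans hpow).sub (hc.const_mul_left a)

theorem limsup_rpow_inv_natCast_eq {u : ℕ → ℝ} (hu : ∀ n, 0 ≤ u n) {r : ℝ} (hr : 0 ≤ r)
    (hupper : ∀ ρ, r < ρ → ∀ᶠ n in atTop, u n ≤ ρ ^ n)
    (hlower : ∀ s, 0 < s → s < r → ¬ ∀ᶠ n in atTop, u n ≤ s ^ n) :
    limsup (fun n : ℕ => u n ^ (n : ℝ)⁻¹) atTop = r := by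
  have root_le_iff : ∀ {ρ : ℝ}, 0 ≤ ρ → ∀ᶠ n : ℕ in atTop, (u n ^ (n : ℝ)⁻¹ ≤ ρ ↔ u n ≤ ρ ^ n) := by
    intro ρ hρ
    filter_upwards [eventually_gt_atTop 0] with n hn
    rw [Real.rpow_inv_le_iff_of_pos (hu n) hρ (by positivity), Real.rpow_natCast]
  have hroot_upper : ∀ ρ, r < ρ → ∀ᶠ n : ℕ in atTop, u n ^ (n : ℝ)⁻¹ ≤ ρ := fun ρ hρ => by
    filter_upwards [hupper ρ hρ, root_le_iff (hr.trans hρ.le)] with n h hiff using hiff.2 h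
  have hbdd : IsBoundedUnder (· ≤ ·) atTop fun n : ℕ => u n ^ (n : ℝ)⁻¹ :=
    isBoundedUnder_of_eventually_le (hroot_upper (r + 1) (by linarith))
  refine le_antisymm (le_of_forall_gt_imp_ge_of_dense fun ρ hρ => ?_)
    (le_of_forall_lt_imp_le_of_dense fun s hs => le_limsup_of_frequently_le ?_ hbdd)
  · exact limsup_le_of_le (isBoundedUnder_of_eventually_ge (Eventually.of_forall fun n =>
      Real.rpow_nonneg (hu n) _)).isCoboundedUnder_le (hroot_upper ρ hρ)
  · rcases le_or_gt s 0 with hs0 | hs0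
    · exact Frequently.of_forall fun n => hs0.trans (Real.rpow_nonneg (hu n) _)
    · refine fun h => hlower s hs0 hs ?_
      filter_upwards [h, root_le_iff hs0.le] with n hn hiff using hiff.1 (not_le.1 hn).le

end Asymptotics

section ExpPoly

variable {R : Type*} [CommRing R]

def expPoly (S : Finset R) (p : R → R[X]) (n : ℕ) : R :=
  ∑ l ∈ S, (p l).eval (n : R) * l ^ n

def shiftSub (a l : R) (q : R[X]) : R[X] :=
  C l * taylor 1 q - C a * q

theorem eval_shiftSub (a l : R) (q : R[X]) (x : R) :
    (shiftSub a l q).eval x = l * q.eval (x + 1) - a * q.eval x := by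
  simp [shiftSub, taylor_eval]

theorem expPoly_shiftSub (S : Finset R) (p : R → R[X]) (a : R) (n : ℕ) :
    expPoly S (fun l => shiftSub a l (p l)) n = expPoly S p (n + 1) - a * expPoly S p n := by
  simp only [expPoly, eval_shiftSub, Finset.mul_sum, ← Finset.sum_sub_distrib]
  refine Finset.sum_congr rfl fun l _ => ?_
  push_cast
  ring

theorem shiftSub_eq_zero_iff [IsDomain R] {a l : R} (hl : l ≠ a) {q : R[X]} :
    shiftSub a l q = 0 ↔ q = 0 := by
  refine ⟨fun h => ?_, fun h => by simp [shiftSub, h]⟩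
  have hcoeff : (shiftSub a l q).coeff q.natDegree = (l - a) * q.leadingCoeff := by
    simp [shiftSub, sub_mul]
  rw [h, coeff_zero, eq_comm, mul_eq_zero, sub_eq_zero, leadingCoeff_eq_zero] at hcoeff
  exact hcoeff.resolve_left hl

theorem iterate_shiftSub_eq_zero_iff [IsDomain R] {a l : R} (hl : l ≠ a) {q : R[X]} (k : ℕ) :
    (shiftSub a l)^[k] q = 0 ↔ q = 0 := by
  induction k with
  | zero => rfl
  | succ k ih => rw [Function.iterate_succ_apply', shiftSub_eq_zero_iff hl, ih]

theorem eval_iterate_shiftSub_self (a : R) (q : R[X]) (k : ℕ) (x : R) :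
    ((shiftSub a a)^[k] q).eval x = a ^ k * (fwdDiff 1)^[k] q.eval x := by
  induction k generalizing x with
  | zero => simp
  | succ k ih =>
    rw [Function.iterate_succ_apply', eval_shiftSub, ih, ih, Function.iterate_succ_apply',
      fwdDiff, pow_succ]
    ring

theorem iterate_shiftSub_self_eq_zero [IsDomain R] [Infinite R] (a : R) {q : R[X]} {k : ℕ}
    (hk : q.natDegree < k) : (shiftSub a a)^[k] q = 0 :=
  Polynomial.funext fun x => by
    rw [eval_iterate_shiftSub_self, fwdDiff_iter_eq_zero_of_degree_lt hk]
    simp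

theorem expPoly_filter_ne_zero [DecidableEq R] (S : Finset R) (p : R → R[X]) :
    expPoly (S.filter (p · ≠ 0)) p = expPoly S p :=
  funext fun n => Finset.sum_filter_of_ne fun l _ h hp => h (by simp [hp])

theorem exists_eventuallyEq_expPoly_of_succ {K : Type*} [Field K] {c : ℕ → K} {S : Finset K}
    {p : K → K[X]}
    (h : (fun n => c (n + 1)) =ᶠ[atTop] expPoly S p) :
    ∃ q : K → K[X], c =ᶠ[atTop] expPoly S q := by
  refine ⟨fun l => C l⁻¹ * taylor (-1) (p l), ?_⟩
  obtain ⟨N, hN⟩ : ∃ N, ∀ m ≥ N, c (m + 1) = expPoly S p m := eventually_atTop.1 h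
  filter_upwards [eventually_ge_atTop (N + 2)] with n hn
  obtain ⟨m, rfl⟩ : ∃ m, n = m + 1 := ⟨n - 1, by omega⟩
  rw [hN m (by omega), expPoly, expPoly]
  refine Finset.sum_congr rfl fun l _ => ?_
  have hpow : l ^ m = l⁻¹ * l ^ (m + 1) := by
    rcases eq_or_ne l 0 with rfl | hl
    · simp [zero_pow (show m ≠ 0 by omega)]
    · rw [pow_succ', inv_mul_cancel_left₀ hl]
  simp only [hpow, Nat.cast_add, Nat.cast_one, eval_mul, eval_C, taylor_eval,
    add_neg_cancel_right]
  ring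

end ExpPoly

section Growth

variable {𝕜 : Type*} [RCLike 𝕜]

theorem expPoly_isLittleO {S : Finset 𝕜} {ρ : ℝ} (hρ : ∀ l ∈ S, ‖l‖ < ρ) (p : 𝕜 → 𝕜[X]) :
    expPoly S p =o[atTop] (ρ ^ ·) := by
  unfold expPoly
  simp_rw [← Finset.sum_fn]
  exact IsLittleO.sum fun l hl => (p l).isLittleO_eval_natCast_mul_pow (hρ l hl)

theorem isBigO_expPoly_iterate_shiftSub {S : Finset 𝕜} {p : 𝕜 → 𝕜[X]} {s : ℝ}
    (h : expPoly S p =O[atTop] (s ^ ·)) (a : 𝕜) (k : ℕ) :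
    expPoly S (fun l => (shiftSub a l)^[k] (p l)) =O[atTop] (s ^ ·) := by
  induction k with
  | zero => exact h
  | succ k ih =>
    simp_rw [Function.iterate_succ_apply']
    exact (funext (expPoly_shiftSub S _ a)).symm ▸ ih.comp_succ_sub_mul a

theorem eq_zero_of_isBigO_expPoly {S : Finset 𝕜} {p : 𝕜 → 𝕜[X]} {s : ℝ} (hs : 0 ≤ s)
    (h : expPoly S p =O[atTop] (s ^ ·)) {μ : 𝕜} (hμ : μ ∈ S) (hsμ : s < ‖μ‖) : p μ = 0 := by
  classical
  induction S using Finset.strongInduction generalizing p with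
  | H S ih =>
  by_cases hS : ∃ a ∈ S, a ≠ μ
  · obtain ⟨a, ha, haμ⟩ := hS
    obtain ⟨k, hk⟩ : ∃ k, (p a).natDegree < k := ⟨_, Nat.lt_succ_self _⟩
    have hkill : expPoly (S.erase a) (fun l => (shiftSub a l)^[k] (p l)) =O[atTop] (s ^ ·) := by
      have : expPoly (S.erase a) (fun l => (shiftSub a l)^[k] (p l)) =
          expPoly S (fun l => (shiftSub a l)^[k] (p l)) :=
        funext fun n => Finset.sum_erase S <| by
          simp only [iterate_shiftSub_self_eq_zero a hk, eval_zero, zero_mul]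
      exact this ▸ isBigO_expPoly_iterate_shiftSub h a k
    exact (iterate_shiftSub_eq_zero_iff haμ.symm k).1
      (ih _ (Finset.erase_ssubset ha) hkill (Finset.mem_erase.2 ⟨haμ.symm, hμ⟩))
  · push Not at hS
    obtain rfl : S = {μ} := Finset.eq_singleton_iff_unique_mem.2 ⟨hμ, hS⟩
    have hsingle : expPoly {μ} p = fun n : ℕ => (p μ).eval (n : 𝕜) * μ ^ n :=
      funext fun n => Finset.sum_singleton _ _
    by_contra hq
    exact not_isBigO_eval_natCast_mul_pow hq hs hsμ (hsingle ▸ h)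

theorem exists_limsup_norm_rpow_eq_of_eventuallyEq_expPoly {c : ℕ → 𝕜} {S : Finset 𝕜}
    {p : 𝕜 → 𝕜[X]} (hc : c =ᶠ[atTop] expPoly S p) :
    ∃ μ, (μ = 0 ∨ μ ∈ S) ∧ limsup (fun n : ℕ => ‖c n‖ ^ (n : ℝ)⁻¹) atTop = ‖μ‖ := by
  classical
  set T := S.filter (p · ≠ 0)
  have hcT : c =ᶠ[atTop] expPoly T p := (expPoly_filter_ne_zero S p).symm ▸ hc
  obtain ⟨μ, hμ, hmax⟩ := (insert 0 T).exists_max_image (‖·‖) (Finset.insert_nonempty 0 T)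
  have hμT : μ = 0 ∨ μ ∈ T := Finset.mem_insert.1 hμ
  refine ⟨μ, hμT.imp_right (Finset.mem_of_mem_filter μ), limsup_rpow_inv_natCast_eq
    (fun n => norm_nonneg _) (norm_nonneg μ) (fun ρ hρ => ?_) (fun s hs hsμ hbound => ?_)⟩
  · have hlittle := expPoly_isLittleO
      (fun l hl => (hmax l (Finset.mem_insert_of_mem hl)).trans_lt hρ) p
    filter_upwards [(hlittle.congr' hcT.symm EventuallyEq.rfl).bound one_pos] with n hn
    simpa [abs_of_pos ((norm_nonneg μ).trans_lt hρ)] using hn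
  · have hμ0 : μ ≠ 0 := norm_pos_iff.1 (hs.trans hsμ)
    have hO : expPoly T p =O[atTop] (s ^ ·) :=
      (IsBigO.of_bound 1 (hbound.mono fun n hn => by simpa [abs_of_pos hs] using hn)).congr' hcT
        EventuallyEq.rfl
    exact (Finset.mem_filter.1 (hμT.resolve_left hμ0)).2
      (eq_zero_of_isBigO_expPoly hs.le hO (hμT.resolve_left hμ0) hsμ)

end Growth

namespace Module.End

variable {K E : Type*} [Field K] [AddCommGroup E] [Module K E]

theorem pow_apply_eq_sum_range_choose_smul (A : End K E) {l : K} {k n : ℕ} {y : E}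
    (hy : ((A - l • 1) ^ k) y = 0) (hkn : k ≤ n) :
    (A ^ n) y = ∑ j ∈ Finset.range k, (n.choose j * l ^ (n - j)) • ((A - l • 1) ^ j) y := by
  have hcomm : Commute (A - l • 1) (l • 1) := (Commute.one_right _).smul_right l
  have hbinom : (A ^ n) y = ∑ j ∈ Finset.range (n + 1),
      (n.choose j * l ^ (n - j)) • ((A - l • 1) ^ j) y := by
    conv_lhs => rw [← sub_add_cancel A (l • 1), hcomm.add_pow, LinearMap.sum_apply]
    refine Finset.sum_congr rfl fun j _ => ?_
    simp [_root_.smul_pow, mul_smul, smul_comm (l ^ (n - j)), Nat.cast_smul_eq_nsmul]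
  rw [hbinom]
  refine (Finset.sum_subset (Finset.range_subset_range.2 (by omega)) fun j _ hj => ?_).symm
  rw [← Nat.sub_add_cancel (not_lt.1 (Finset.mem_range.not.1 hj)), pow_add, mul_apply, hy,
    map_zero, smul_zero]

theorem exists_eventuallyEq_eval_mul_pow [CharZero K] (A : End K E) (L : E →ₗ[K] K) {l : K}
    {k : ℕ} {y : E} (hy : ((A - l • 1) ^ k) y = 0) :
    ∃ P : K[X], (fun n : ℕ => L ((A ^ n) y)) =ᶠ[atTop] fun n => P.eval (n : K) * l ^ n := by
  rcases eq_or_ne l 0 with rfl | hl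
  · refine ⟨0, (eventually_ge_atTop k).mono fun n hn => ?_⟩
    rw [zero_smul, sub_zero] at hy
    obtain ⟨m, rfl⟩ := Nat.exists_eq_add_of_le' hn
    simp only [pow_add, mul_apply, hy, map_zero, eval_zero, zero_mul]
  refine ⟨∑ j ∈ Finset.range k,
    C (L (((A - l • 1) ^ j) y) / (j.factorial * l ^ j)) * descPochhammer K j,
    (eventually_ge_atTop k).mono fun n hn => ?_⟩
  simp only [pow_apply_eq_sum_range_choose_smul A hy hn, map_sum, map_smul,
    eval_finsetSum, Finset.sum_mul]
  refine Finset.sum_congr rfl fun j hj => ?_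
  have hjn : j ≤ n := (Finset.mem_range.1 hj).le.trans hn
  rw [Nat.cast_choose_eq_descPochhammer_div, pow_sub₀ _ hl hjn, eval_mul, eval_C, smul_eq_mul]
  field_simp

theorem exists_eventuallyEq_expPoly [IsAlgClosed K] [CharZero K] [FiniteDimensional K E]
    (A : End K E) (L : E →ₗ[K] K) (x : E) :
    ∃ (S : Finset K) (p : K → K[X]), (∀ l ∈ S, A.HasEigenvalue l) ∧
      (fun n : ℕ => L ((A ^ n) x)) =ᶠ[atTop] expPoly S p := by
  obtain ⟨f, hf, rfl⟩ := (Submodule.mem_iSup_iff_exists_finsupp _ x).1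
    (A.iSup_maxGenEigenspace_eq_top ▸ Submodule.mem_top)
  choose k hk using fun l => (A.mem_maxGenEigenspace l (f l)).1 (hf l)
  choose P hP using fun l => A.exists_eventuallyEq_eval_mul_pow L (hk l)
  refine ⟨f.support, P, fun l hl => ?_, ?_⟩
  · exact HasUnifEigenvalue.lt zero_lt_one
      (Submodule.ne_bot_iff _ |>.2 ⟨f l, hf l, Finsupp.mem_support_iff.1 hl⟩)
  · filter_upwards [(eventually_all_finset f.support).2 fun l _ => hP l] with n hn
    simpa only [Finsupp.sum, map_sum, expPoly] using Finset.sum_congr rfl hn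

end Module.End
end

/-- For a finite-rank endomorphism `φ` of a real vector space, `v ∈ V` and
`ξ ∈ V*`, there is an eigenvalue `λ` of (the complexification of) `φ` restricted to its
image, or `λ = 0`, such that `limsup |ξ(φⁿ(v))|^{1/n} = |λ|`. -/
theorem limsup_eq_abs_eigenvalue
    (V : Type*) [AddCommGroup V] [Module ℝ V] (φ : V →ₗ[ℝ] V)
    (hfin : FiniteDimensional ℝ (LinearMap.range φ))
    (v : V) (ξ : V →ₗ[ℝ] ℝ) :
    ∃ μ : ℂ,
      (μ = 0 ∨ Module.End.HasEigenvalue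
        (LinearMap.baseChange ℂ (φ.restrict (fun x _ => LinearMap.mem_range_self φ x))) μ) ∧
      Filter.limsup (fun n : ℕ => |ξ ((φ ^ n) v)| ^ ((n : ℝ)⁻¹)) Filter.atTop
        = ‖μ‖ := by
  set ψ := φ.restrict (fun x _ => LinearMap.mem_range_self φ x)
  let L : ℂ ⊗[ℝ] LinearMap.range φ →ₗ[ℂ] ℂ := LinearMap.liftBaseChange ℂ
    (Complex.ofRealAm.toLinearMap ∘ₗ ξ ∘ₗ (LinearMap.range φ).subtype)
  let w : LinearMap.range φ := ⟨φ v, LinearMap.mem_range_self φ v⟩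
  have hseq : ∀ n : ℕ, ((ξ ((φ ^ (n + 1)) v) : ℝ) : ℂ) = L ((ψ.baseChange ℂ ^ n) (1 ⊗ₜ w)) := by
    intro n
    rw [← LinearMap.baseChange_pow, LinearMap.baseChange_tmul, LinearMap.liftBaseChange_tmul,
      Module.End.pow_restrict, pow_succ, Module.End.mul_apply]
    simp [w]
  obtain ⟨S, p, hS, hp⟩ := Module.End.exists_eventuallyEq_expPoly (ψ.baseChange ℂ) L (1 ⊗ₜ w)
  obtain ⟨q, hq⟩ := exists_eventuallyEq_expPoly_of_succ
    (c := fun n => ((ξ ((φ ^ n) v) : ℝ) : ℂ)) (by simpa only [hseq] using hp)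
  obtain ⟨μ, hμ, hlim⟩ := exists_limsup_norm_rpow_eq_of_eventuallyEq_expPoly hq
  exact ⟨μ, hμ.imp_right (hS μ), by simpa only [Complex.norm_real, Real.norm_eq_abs] using hlim⟩
end

section
/- Let φ : V → V be a finite-rank endomorphism, v ∈ V, ξ ∈ V*, with ρ := limsup_{n→∞} |ξ(φ^n(v))|^{1/n} > 0. Then the power series D_φ(z) = exp(−Σ_{n≥1} tr(φ^n) z^n/n), equal to the polynomial det(Id − zM) where M is any matrix representing φ as in Proposition ap1, has a zero z₀ with |z₀| = 1/ρ. -/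
/-!
The sequence `aₙ = ξ(φⁿ w)` satisfies `aₙ₊₁ = c ⬝ᵥ Mⁿ u` with `cⱼ = ξ(vⱼ)`, `uᵢ = ωᵢ(w)`, so by
Cayley–Hamilton its generating function `A` satisfies `D · A = P` for `D(z) = det(1 - zM)` and
some polynomial `P`. By Cauchy–Hadamard, `A` has radius of convergence `1/ρ`. After cancelling
`gcd(P, D)`, the reduced denominator `D'` has no zero in the open disc of convergence, where
`D' A = P'` with `P'` coprime to `D'`. If `D` had no zero on the circle `|z| = 1/ρ` either,
`P'/D'` would be holomorphic on a strictly larger disc, and its Taylor series at `0`, which is `A`,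
would have radius `> 1/ρ`.
-/

open Polynomial Finset Matrix Filter Metric FormalMultilinearSeries
open scoped ENNReal NNReal

namespace LinearMap

variable {R S V : Type*} [CommRing R] [CommRing S] [AddCommGroup V] [Module R V] {k : ℕ}
  (f : R →+* S) (ω : Fin k → V →ₗ[R] R) (v : Fin k → V) {φ : V →ₗ[R] V}

theorem map_coords_pow_apply_of_eq_sum_smulRight (hφ : φ = ∑ i, (ω i).smulRight (v i))
    (x : V) (n : ℕ) :
    (fun i => f (ω i ((φ ^ n) x))) =
      (Matrix.of fun i j => f (ω i (v j))) ^ n *ᵥ fun i => f (ω i x) := by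
  induction n with
  | zero => simp
  | succ n ih =>
    rw [pow_succ', pow_succ', ← mulVec_mulVec, ← ih]
    ext i
    simp [hφ, mulVec, dotProduct, mul_comm]

theorem map_apply_pow_succ_of_eq_sum_smulRight (hφ : φ = ∑ i, (ω i).smulRight (v i))
    (ξ : V →ₗ[R] R) (x : V) (n : ℕ) :
    f (ξ ((φ ^ (n + 1)) x)) =
      (fun j => f (ξ (v j))) ⬝ᵥ
        ((Matrix.of fun i j => f (ω i (v j))) ^ n *ᵥ fun i => f (ω i x)) := by
  rw [← map_coords_pow_apply_of_eq_sum_smulRight f ω v hφ, pow_succ', Module.End.mul_apply]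
  simp [hφ, dotProduct, mul_comm]

end LinearMap

namespace Matrix

variable {R ι : Type*} [CommRing R] [Fintype ι] [DecidableEq ι]

theorem eval_charpolyRev_eq_det (M : Matrix ι ι R) (z : R) :
    M.charpolyRev.eval z = (1 - z • M).det := by
  rw [charpolyRev, ← coe_evalRingHom, RingHom.map_det]
  congr 1
  ext i j
  rcases eq_or_ne i j with rfl | hij <;> simp [*] <;> ring

variable [Nontrivial R]

theorem sum_charpoly_coeff_mul_dotProduct_pow_mulVec (M : Matrix ι ι R) (c u : ι → R) (n : ℕ) :
    ∑ i ∈ range (Fintype.card ι + 1), M.charpoly.coeff i * (c ⬝ᵥ (M ^ (i + n) *ᵥ u)) = 0 := by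
  have hCH := M.aeval_self_charpoly
  rw [aeval_eq_sum_range, M.charpoly_natDegree_eq_dim] at hCH
  calc _ = c ⬝ᵥ ((∑ i ∈ range (Fintype.card ι + 1), M.charpoly.coeff i • M ^ i) *ᵥ
        (M ^ n *ᵥ u)) := by
        rw [mulVec_mulVec, sum_mul, sum_mulVec, dotProduct_sum]
        refine sum_congr rfl fun i _ => ?_
        rw [smul_mul_assoc, smul_mulVec, dotProduct_smul, smul_eq_mul, pow_add]
    _ = 0 := by rw [hCH, zero_mulVec, dotProduct_zero]

theorem coeff_charpolyRev_mul_mk_eq_zero (M : Matrix ι ι R) (c u : ι → R) (a : ℕ → R)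
    (ha : ∀ n, a (n + 1) = c ⬝ᵥ (M ^ n *ᵥ u)) {m : ℕ} (hm : Fintype.card ι < m) :
    PowerSeries.coeff m ((M.charpolyRev : PowerSeries R) * PowerSeries.mk a) = 0 := by
  set k := Fintype.card ι
  have hdeg : M.charpoly.natDegree = k := M.charpoly_natDegree_eq_dim
  rw [PowerSeries.coeff_mul, Nat.sum_antidiagonal_eq_sum_range_succ_mk]
  simp only [Polynomial.coeff_coe, PowerSeries.coeff_mk]
  rw [← sum_subset (range_subset_range.mpr (by omega : k + 1 ≤ m + 1)), ← sum_range_reflect,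
    ← M.sum_charpoly_coeff_mul_dotProduct_pow_mulVec c u (m - k - 1)]
  · refine sum_congr rfl fun i hi => ?_
    rw [mem_range] at hi
    rw [← M.reverse_charpoly, coeff_reverse, hdeg, revAt_le (by omega),
      show k - (k + 1 - 1 - i) = i by omega,
      show m - (k + 1 - 1 - i) = i + (m - k - 1) + 1 by omega, ha]
  · intro j _ hj
    simp only [mem_range, not_lt] at hj
    rw [← M.reverse_charpoly, coeff_eq_zero_of_natDegree_lt, zero_mul]
    exact (reverse_natDegree_le _).trans_lt (by omega)

theorem exists_charpolyRev_mul_mk_eq_coe (M : Matrix ι ι R) (c u : ι → R) (a : ℕ → R)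
    (ha : ∀ n, a (n + 1) = c ⬝ᵥ (M ^ n *ᵥ u)) :
    ∃ P : R[X], (M.charpolyRev : PowerSeries R) * PowerSeries.mk a = P := by
  refine ⟨PowerSeries.trunc (Fintype.card ι + 1)
    ((M.charpolyRev : PowerSeries R) * PowerSeries.mk a), PowerSeries.ext fun m => ?_⟩
  rw [Polynomial.coeff_coe, PowerSeries.coeff_trunc]
  split_ifs with hm
  · rfl
  · exact M.coeff_charpolyRev_mul_mk_eq_zero c u a ha (by omega)

end Matrix

theorem PowerSeries.exists_isCoprime_coe_mul_eq_coe {K : Type*} [Field K] {Q P : K[X]}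
    {f : PowerSeries K} (hQ : Q ≠ 0) (h : (Q : PowerSeries K) * f = P) :
    ∃ Q' P' : K[X], Q' ∣ Q ∧ IsCoprime Q' P' ∧ (Q' : PowerSeries K) * f = P' := by
  classical
  obtain ⟨Q', P', hQ', hP', hunit⟩ := extract_gcd Q P
  refine ⟨Q', P', Dvd.intro_left _ hQ'.symm, (gcd_isUnit_iff _ _).mp hunit, ?_⟩
  have hG : ((gcd Q P : K[X]) : PowerSeries K) ≠ 0 := by
    rw [Ne, Polynomial.coe_eq_zero_iff, _root_.gcd_eq_zero_iff]
    exact fun h => hQ h.1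
  refine mul_left_cancel₀ hG ?_
  rw [← mul_assoc, ← Polynomial.coe_mul, ← Polynomial.coe_mul, ← hQ', ← hP', h]

theorem Polynomial.eval_eq_tsum {R : Type*} [Semiring R] [TopologicalSpace R] [T2Space R]
    (p : R[X]) (z : R) : p.eval z = ∑' n, p.coeff n * z ^ n := by
  rw [eval_eq_sum, Polynomial.sum_def,
    tsum_eq_sum fun n hn => by rw [notMem_support_iff.mp hn, zero_mul]]

theorem Polynomial.eval_mul_tsum_of_coe_mul_mk_eq {R : Type*} [NormedCommRing R]
    [CompleteSpace R] {Q P : R[X]} {a : ℕ → R} (h : (Q : PowerSeries R) * PowerSeries.mk a = P)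
    {z : R} (hz : Summable fun n => ‖a n * z ^ n‖) :
    Q.eval z * ∑' n, a n * z ^ n = P.eval z := by
  have hQ : Summable fun n => ‖Q.coeff n * z ^ n‖ :=
    summable_of_ne_finset_zero (s := Q.support) fun n hn => by
      rw [notMem_support_iff.mp hn, zero_mul, norm_zero]
  rw [Q.eval_eq_tsum, tsum_mul_tsum_eq_tsum_sum_antidiagonal_of_summable_norm hQ hz,
    P.eval_eq_tsum]
  refine tsum_congr fun n => ?_
  rw [← Polynomial.coeff_coe, ← h, PowerSeries.coeff_mul, sum_mul]
  refine sum_congr rfl fun ij hij => ?_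
  rw [HasAntidiagonal.mem_antidiagonal] at hij
  rw [Polynomial.coeff_coe, PowerSeries.coeff_mk, ← hij, pow_add]
  ring

section ofScalars

variable {𝕜 : Type*} [NontriviallyNormedField 𝕜]

theorem FormalMultilinearSeries.ofScalars_radius_inv_eq_ofReal_limsup (a : ℕ → 𝕜)
    (h : IsBoundedUnder (· ≤ ·) atTop fun n => ‖a n‖ ^ (n : ℝ)⁻¹) :
    (ofScalars 𝕜 a).radius⁻¹ = ENNReal.ofReal (limsup (fun n => ‖a n‖ ^ (n : ℝ)⁻¹) atTop) := by
  rw [radius_inv_eq_limsup,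
    ENNReal.ofReal_limsup (isCoboundedUnder_le_of_le atTop fun n => by positivity) h]
  congr 1
  ext n
  rw [← ENNReal.ofReal_coe_nnreal, NNReal.coe_rpow, coe_nnnorm, ofScalars_norm, one_div]

variable [CompleteSpace 𝕜]

theorem Polynomial.eval_mul_ofScalarsSum_of_coe_mul_mk_eq {Q P : 𝕜[X]} {a : ℕ → 𝕜}
    (h : (Q : PowerSeries 𝕜) * PowerSeries.mk a = P) {z : 𝕜}
    (hz : (‖z‖₊ : ℝ≥0∞) < (ofScalars 𝕜 a).radius) :
    Q.eval z * ofScalarsSum a z = P.eval z := by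
  have hsum := (ofScalars 𝕜 a).summable_norm_apply (mem_eball_zero_iff.mpr hz)
  simp only [ofScalars_apply_eq, smul_eq_mul] at hsum
  simpa [ofScalars_sum_eq] using Q.eval_mul_tsum_of_coe_mul_mk_eq h hsum

theorem Polynomial.eval_ne_zero_of_lt_radius {Q P : 𝕜[X]} {a : ℕ → 𝕜}
    (h : (Q : PowerSeries 𝕜) * PowerSeries.mk a = P) (hQP : IsCoprime Q P) {z : 𝕜}
    (hz : (‖z‖₊ : ℝ≥0∞) < (ofScalars 𝕜 a).radius) : Q.eval z ≠ 0 := by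
  intro hQz
  have hPz : P.eval z = 0 := by
    rw [← eval_mul_ofScalarsSum_of_coe_mul_mk_eq h hz, hQz, zero_mul]
  obtain ⟨A, B, hAB⟩ := hQP
  simpa [hQz, hPz] using congrArg (Polynomial.eval z) hAB

end ofScalars

theorem HasFPowerSeriesAt.le_radius_of_differentiableOn {E : Type*} [NormedAddCommGroup E]
    [NormedSpace ℂ E] [CompleteSpace E] {f : ℂ → E} {p : FormalMultilinearSeries ℂ ℂ E} {c : ℂ}
    {R : ℝ≥0} (hf : HasFPowerSeriesAt f p c) (hd : DifferentiableOn ℂ f (closedBall c R))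
    (hR : 0 < R) : (R : ℝ≥0∞) ≤ p.radius := by
  have hc := hd.hasFPowerSeriesOnBall hR
  rw [hf.eq_formalMultilinearSeries hc.hasFPowerSeriesAt]
  exact hc.r_le

theorem Polynomial.ofReal_lt_radius_of_forall_eval_ne_zero {Q P : ℂ[X]} {a : ℕ → ℂ}
    (h : (Q : PowerSeries ℂ) * PowerSeries.mk a = P) (hrad : 0 < (ofScalars ℂ a).radius)
    {r : ℝ} (hr : 0 ≤ r) (hQ : ∀ z ∈ closedBall (0 : ℂ) r, Q.eval z ≠ 0) :
    ENNReal.ofReal r < (ofScalars ℂ a).radius := by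
  obtain ⟨δ, hδ, hsub⟩ := (isCompact_closedBall (0 : ℂ) r).exists_cthickening_subset_open
    (isOpen_ne_fun Q.continuous continuous_const) hQ
  rw [cthickening_closedBall hδ.le hr, add_comm] at hsub
  have hseries : HasFPowerSeriesAt (fun z => P.eval z / Q.eval z) (ofScalars ℂ a) 0 := by
    refine ((ofScalars ℂ a).hasFPowerSeriesOnBall hrad).hasFPowerSeriesAt.congr ?_
    filter_upwards [eball_mem_nhds 0 hrad, ball_mem_nhds 0 hδ] with z hz hzδ
    have hQz : Q.eval z ≠ 0 :=
      hsub (closedBall_subset_closedBall (by linarith) (ball_subset_closedBall hzδ))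
    rw [eq_div_iff hQz, mul_comm]
    exact eval_mul_ofScalarsSum_of_coe_mul_mk_eq h (mem_eball_zero_iff.mp hz)
  have hdiff : DifferentiableOn ℂ (fun z => P.eval z / Q.eval z) (closedBall 0 (r + δ)) :=
    P.differentiable.differentiableOn.div Q.differentiable.differentiableOn fun z hz => hsub hz
  calc ENNReal.ofReal r < ENNReal.ofReal (r + δ) :=
        (ENNReal.ofReal_lt_ofReal_iff (by positivity)).mpr (by linarith)
    _ ≤ (ofScalars ℂ a).radius :=
      hseries.le_radius_of_differentiableOn (R := (r + δ).toNNReal)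
        (by rwa [Real.coe_toNNReal _ (by positivity)]) (Real.toNNReal_pos.mpr (by positivity))

theorem Polynomial.exists_norm_eq_isRoot_of_coe_mul_mk_eq {Q P : ℂ[X]} {a : ℕ → ℂ}
    (hQ : Q ≠ 0) (h : (Q : PowerSeries ℂ) * PowerSeries.mk a = P) {r : ℝ} (hr : 0 < r)
    (hrad : (ofScalars ℂ a).radius = ENNReal.ofReal r) : ∃ z : ℂ, ‖z‖ = r ∧ Q.IsRoot z := by
  by_contra! hcircle
  obtain ⟨Q', P', hdvd, hcop, h'⟩ := PowerSeries.exists_isCoprime_coe_mul_eq_coe hQ h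
  have hQ' : ∀ z ∈ closedBall (0 : ℂ) r, Q'.eval z ≠ 0 := by
    intro z hz
    rcases (mem_closedBall_zero_iff.mp hz).lt_or_eq with hlt | heq
    · refine eval_ne_zero_of_lt_radius h' hcop ?_
      rwa [hrad, ← ENNReal.ofReal_coe_nnreal, coe_nnnorm, ENNReal.ofReal_lt_ofReal_iff hr]
    · exact fun hz0 => hcircle z heq (eval_eq_zero_of_dvd_of_eval_eq_zero hdvd hz0)
  have hlt := ofReal_lt_radius_of_forall_eval_ne_zero h' (by simpa [hrad] using hr) hr.le hQ'
  exact hlt.ne hrad.symm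

/-- Let `φ = Σ ωᵢ ⊗ vᵢ` be a finite-rank endomorphism, `v ∈ V`, `ξ ∈ V*`,
and suppose `ρ := limsup |ξ(φⁿ(v))|^{1/n} > 0`.  Then the polynomial
`D_φ(z) = det(Id − z·M)`, with `M i j = ωᵢ(vⱼ)`, has a (complex) zero `z₀` with
`|z₀| = 1/ρ`. -/
theorem det_series_has_zero_of_limsup_pos
    (V : Type*) [AddCommGroup V] [Module ℝ V] (k : ℕ)
    (ω : Fin k → (V →ₗ[ℝ] ℝ)) (v : Fin k → V) (φ : V →ₗ[ℝ] V)
    (hφ : φ = ∑ i, (ω i).smulRight (v i))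
    (w : V) (ξ : V →ₗ[ℝ] ℝ) (ρ : ℝ)
    (hρ : ρ = Filter.limsup (fun n : ℕ => |ξ ((φ ^ n) w)| ^ ((n : ℝ)⁻¹)) Filter.atTop)
    (hρpos : 0 < ρ) :
    ∃ z₀ : ℂ, ‖z₀‖ = 1 / ρ ∧
      Matrix.det ((1 : Matrix (Fin k) (Fin k) ℂ)
        - z₀ • Matrix.of fun i j => (ω i (v j) : ℂ)) = 0 := by
  set M : Matrix (Fin k) (Fin k) ℂ := Matrix.of fun i j => (ω i (v j) : ℂ)
  set a : ℕ → ℂ := fun n => (ξ ((φ ^ n) w) : ℂ)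
  have ha : ∀ n, a (n + 1) = (fun j => (ξ (v j) : ℂ)) ⬝ᵥ (M ^ n *ᵥ fun i => (ω i w : ℂ)) :=
    LinearMap.map_apply_pow_succ_of_eq_sum_smulRight Complex.ofRealHom ω v hφ ξ w
  have hnorm : (fun n : ℕ => ‖a n‖ ^ (n : ℝ)⁻¹) = fun n : ℕ => |ξ ((φ ^ n) w)| ^ (n : ℝ)⁻¹ := by
    simp [a]
  -- In `ℝ`, the `limsup` of a sequence that is unbounded above is the junk value `0`.
  have hbdd : IsBoundedUnder (· ≤ ·) atTop fun n : ℕ => ‖a n‖ ^ (n : ℝ)⁻¹ := by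
    by_contra hunb
    rw [hnorm] at hunb
    exact hρpos.ne' (hρ.trans (Real.limsup_of_not_isBoundedUnder hunb))
  have hrad : (ofScalars ℂ a).radius = ENNReal.ofReal ρ⁻¹ := by
    rw [← inv_inv (ofScalars ℂ a).radius, ofScalars_radius_inv_eq_ofReal_limsup a hbdd, hnorm,
      ← hρ, ENNReal.ofReal_inv_of_pos hρpos]
  obtain ⟨P, hP⟩ := M.exists_charpolyRev_mul_mk_eq_coe _ _ a ha
  have hD : M.charpolyRev ≠ 0 := fun h0 => by simpa [h0] using M.eval_charpolyRev
  obtain ⟨z₀, hz₀, hroot⟩ :=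
    exists_norm_eq_isRoot_of_coe_mul_mk_eq hD hP (inv_pos.mpr hρpos) hrad
  exact ⟨z₀, hz₀.trans (one_div ρ).symm, M.eval_charpolyRev_eq_det z₀ ▸ hroot⟩
end

section
/- Let F : Ω \ C_F → Ω be a PM map with lap set L_F, and for each lap I define σ(I) ∈ {−1,0,1} as in Lemma p8. If I ∈ L_F⁻ (F decreasing on I), then σ(I) = −1 if F has a fixed point in the interior of I, and σ(I) = 0 otherwise. Consequently Σ_{I ∈ L_F⁻} σ(I) = −#Fix⁻(F), where Fix⁻(F) is the set of fixed points of F in Ω \ C_F at which F is decreasing. -/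
/-!
On a decreasing lap `[c,d]` the one-sided limits satisfy `F(d−) ≤ F(c+)`, and by connectedness
both `[c,d]` and `F(]c,d[)` lie in single components of `Ω`. Since `x ↦ F x - x` is continuous
with limits `F(c+) - c` and `F(d−) - d` at the ends, `F` has a fixed point in `]c,d[` exactly when
`c < F(c+)` and `F(d−) < d`; comparing with the definition of `ω_c⁺` and `ω_d⁻` gives
`σ([c,d]) = -1` in that case and `0` otherwise. A decreasing lap has at most one fixed point and
a point of `Ω \ C_F` lies in exactly one lap, so summing over the decreasing laps counts `Fix⁻(F)`.
-/

open scoped Classical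

/-- `[c,d]` is a lap of a piecewise monotone map with turning set `C` on `Ω`. -/
def IsLapOf (C : Finset ℝ) (Ω : Set ℝ) (c d : ℝ) : Prop :=
  c < d ∧ Set.Icc c d ⊆ Ω ∧ c ∈ C ∧ d ∈ C ∧ ∀ x ∈ Set.Ioo c d, x ∉ (C : Set ℝ)

/-- The one-sided limit `F(c+)`. -/
noncomputable def rightLim (F : ℝ → ℝ) (c : ℝ) : ℝ :=
  Filter.limUnder (nhdsWithin c (Set.Ioi c)) F

/-- The one-sided limit `F(d−)`. -/
noncomputable def leftLim' (F : ℝ → ℝ) (d : ℝ) : ℝ :=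
  Filter.limUnder (nhdsWithin d (Set.Iio d)) F

/-- The linear form `ω_c⁻` evaluated at `x`: `1` iff `x ∈ [c, bᵢ]`, where `[aᵢ,bᵢ]` is
the component of `Ω` containing `c`. -/
noncomputable def omegaMinus (m : ℕ) (a b : Fin m → ℝ) (c x : ℝ) : ℤ :=
  if ∃ i, c ∈ Set.Icc (a i) (b i) ∧ x ∈ Set.Icc c (b i) then 1 else 0

/-- The linear form `ω_c⁺` evaluated at `x`: `−1` iff `x ∈ ]c, bᵢ]`. -/
noncomputable def omegaPlus (m : ℕ) (a b : Fin m → ℝ) (c x : ℝ) : ℤ :=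
  if ∃ i, c ∈ Set.Icc (a i) (b i) ∧ x ∈ Set.Ioc c (b i) then -1 else 0

/-- `σ([c,d]) = ω_c⁺(F(c+)) + ω_d⁻(F(d−))`. -/
noncomputable def sigmaLap (m : ℕ) (a b : Fin m → ℝ) (F : ℝ → ℝ) (c d : ℝ) : ℤ :=
  omegaPlus m a b c (rightLim F c) + omegaMinus m a b d (leftLim' F d)

open Set Filter Topology
open scoped Finset

lemma exists_fixed_mem_Ioo_iff {F : ℝ → ℝ} {c d L M : ℝ} (hcd : c < d)
    (hcont : ContinuousOn F (Ioo c d)) (hanti : AntitoneOn F (Ioo c d))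
    (hM : Tendsto F (𝓝[>] c) (𝓝 M)) (hL : Tendsto F (𝓝[<] d) (𝓝 L)) :
    (∃ x ∈ Ioo c d, F x = x) ↔ c < M ∧ L < d := by
  constructor
  · rintro ⟨y, hy, hFy⟩
    have hyM : y ≤ M := ge_of_tendsto hM <| by
      filter_upwards [Ioo_mem_nhdsGT hy.1] with x hx
      exact hFy ▸ hanti ⟨hx.1, hx.2.trans hy.2⟩ hy hx.2.le
    have hLy : L ≤ y := le_of_tendsto hL <| by
      filter_upwards [Ioo_mem_nhdsLT hy.2] with x hx
      exact hFy ▸ hanti hy ⟨hy.1.trans hx.1, hx.2⟩ hx.1.le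
    exact ⟨hy.1.trans_le hyM, hLy.trans_lt hy.2⟩
  · rintro ⟨hcM, hLd⟩
    have hright : Tendsto (fun x => F x - x) (𝓝[>] c) (𝓝 (M - c)) :=
      hM.sub (tendsto_id.mono_left nhdsWithin_le_nhds)
    have hleft : Tendsto (fun x => F x - x) (𝓝[<] d) (𝓝 (L - d)) :=
      hL.sub (tendsto_id.mono_left nhdsWithin_le_nhds)
    obtain ⟨u, hu, hgu⟩ := (Eventually.and (Ioo_mem_nhdsGT hcd)
      (hright.eventually_const_lt (sub_pos.mpr hcM))).exists
    obtain ⟨v, hv, hgv⟩ := (Eventually.and (Ioo_mem_nhdsLT hcd)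
      (hleft.eventually_lt_const (sub_neg.mpr hLd))).exists
    obtain ⟨z, hz, hgz⟩ := isPreconnected_Ioo.intermediate_value hv hu
      (hcont.sub continuousOn_id) ⟨hgv.le, hgu.le⟩
    exact ⟨z, hz, sub_eq_zero.mp hgz⟩

section Components

variable {m : ℕ} {a b : Fin m → ℝ}

lemma eq_of_mem_Icc_of_mem_Icc (horder : ∀ i j : Fin m, i < j → b i < a j) {i j : Fin m}
    {x : ℝ} (hi : x ∈ Icc (a i) (b i)) (hj : x ∈ Icc (a j) (b j)) : i = j := by
  by_contra hne
  rcases lt_or_gt_of_ne hne with h | h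
  · linarith [horder i j h, hi.2, hj.1]
  · linarith [horder j i h, hi.1, hj.2]

lemma IsPreconnected.exists_subset_Icc (horder : ∀ i j : Fin m, i < j → b i < a j)
    {s : Set ℝ} (hs : IsPreconnected s) (hsub : s ⊆ ⋃ i, Icc (a i) (b i)) {x : ℝ}
    (hx : x ∈ s) : ∃ i, s ⊆ Icc (a i) (b i) := by
  obtain ⟨i, hxi⟩ := mem_iUnion.mp (hsub hx)
  set others := ⋃ (k) (_ : k ≠ i), Icc (a k) (b k)
  have hclosed : IsClosed others :=
    isClosed_iUnion_of_finite fun _ => isClosed_iUnion_of_finite fun _ => isClosed_Icc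
  have hdisj : Disjoint (Icc (a i) (b i)) others := by
    refine Set.disjoint_left.mpr fun y hyi hy => ?_
    obtain ⟨k, hk, hyk⟩ := mem_iUnion₂.mp hy
    exact hk (eq_of_mem_Icc_of_mem_Icc horder hyk hyi)
  have hcover : s ⊆ Icc (a i) (b i) ∪ others := by
    intro y hy
    obtain ⟨k, hyk⟩ := mem_iUnion.mp (hsub hy)
    by_cases hk : k = i
    · exact Or.inl (hk ▸ hyk)
    · exact Or.inr (mem_iUnion₂.mpr ⟨k, hk, hyk⟩)
  refine ⟨i, (isPreconnected_iff_subset_of_disjoint_closed.mp hs _ _ isClosed_Icc hclosed hcover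
    (by rw [hdisj.inter_eq, inter_empty])).resolve_right fun h => ?_⟩
  exact Set.disjoint_left.mp hdisj hxi (h hx)

lemma omegaPlus_eq_ite (horder : ∀ i j : Fin m, i < j → b i < a j) {i : Fin m} {c x : ℝ}
    (hc : c ∈ Icc (a i) (b i)) :
    omegaPlus m a b c x = if x ∈ Ioc c (b i) then -1 else 0 :=
  if_congr ⟨fun ⟨_, hk, hx⟩ => eq_of_mem_Icc_of_mem_Icc horder hk hc ▸ hx,
    fun hx => ⟨i, hc, hx⟩⟩ rfl rfl

lemma omegaMinus_eq_ite (horder : ∀ i j : Fin m, i < j → b i < a j) {i : Fin m} {c x : ℝ}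
    (hc : c ∈ Icc (a i) (b i)) :
    omegaMinus m a b c x = if x ∈ Icc c (b i) then 1 else 0 :=
  if_congr ⟨fun ⟨_, hk, hx⟩ => eq_of_mem_Icc_of_mem_Icc horder hk hc ▸ hx,
    fun hx => ⟨i, hc, hx⟩⟩ rfl rfl

lemma omegaPlus_add_omegaMinus_eq_ite (horder : ∀ i j : Fin m, i < j → b i < a j)
    {i j : Fin m} {c d L M : ℝ} (hcd : c < d) (hcdi : Icc c d ⊆ Icc (a i) (b i))
    (hLM : L ≤ M) (hL : a j ≤ L) (hM : M ≤ b j) :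
    omegaPlus m a b c M + omegaMinus m a b d L = if c < M ∧ L < d then -1 else 0 := by
  have hc := hcdi ⟨le_rfl, hcd.le⟩
  have hd := hcdi ⟨hcd.le, le_rfl⟩
  rw [omegaPlus_eq_ite horder hc, omegaMinus_eq_ite horder hd]
  by_cases hcM : c < M
  · by_cases hLd : L < d
    · -- `max L c` lies in both components
      have hji : j = i := eq_of_mem_Icc_of_mem_Icc horder
        ⟨hL.trans (le_max_left L c), max_le hLM hcM.le |>.trans hM⟩
        ⟨hc.1.trans (le_max_right L c), max_le (hLd.trans_le hd.2).le (hcd.trans_le hd.2).le⟩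
      subst hji
      simp [hcM, hLd, hM, not_le.mpr hLd]
    · by_cases hLi : L ≤ b i
      · have hji : j = i := eq_of_mem_Icc_of_mem_Icc horder ⟨hL, hLM.trans hM⟩
          ⟨hd.1.trans (not_lt.mp hLd), hLi⟩
        subst hji
        simp [hcM, hM, hLi, not_lt.mp hLd]
      · have hMi : ¬ M ≤ b i := fun h => hLi (hLM.trans h)
        simp [hLi, hMi, hLd]
  · have hLd : ¬ d ≤ L := fun h => hcM (hcd.trans_le (h.trans hLM))
    simp [hcM, hLd]

lemma sigmaLap_eq_ite (horder : ∀ i j : Fin m, i < j → b i < a j)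
    {C : Finset ℝ} {F : ℝ → ℝ}
    (hmaps : ∀ x ∈ (⋃ j, Icc (a j) (b j)) \ (C : Set ℝ), F x ∈ ⋃ j, Icc (a j) (b j))
    {c d : ℝ} (hlap : IsLapOf C (⋃ j, Icc (a j) (b j)) c d)
    (hcont : ContinuousOn F (Ioo c d)) (hanti : AntitoneOn F (Ioo c d)) :
    sigmaLap m a b F c d = if ∃ x ∈ Ioo c d, F x = x then -1 else 0 := by
  obtain ⟨hcd, hΩ, -, -, hC⟩ := hlap
  obtain ⟨i, hi⟩ := isPreconnected_Icc.exists_subset_Icc horder hΩ (left_mem_Icc.2 hcd.le)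
  have hne : (Ioo c d).Nonempty := nonempty_Ioo.2 hcd
  have himage : F '' Ioo c d ⊆ ⋃ j, Icc (a j) (b j) := by
    rintro _ ⟨x, hx, rfl⟩
    exact hmaps x ⟨hΩ (Ioo_subset_Icc_self hx), hC x hx⟩
  obtain ⟨j, hj⟩ := (isPreconnected_Ioo.image F hcont).exists_subset_Icc horder himage
    (mem_image_of_mem F hne.some_mem)
  have hSne : (F '' Ioo c d).Nonempty := hne.image F
  have hbddA : BddAbove (F '' Ioo c d) := bddAbove_Icc.mono hj
  have hbddB : BddBelow (F '' Ioo c d) := bddBelow_Icc.mono hj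
  have hM := hanti.tendsto_nhdsWithin_Ioo_right hne hbddA
  have hL := hanti.tendsto_nhdsWithin_Ioo_left hne hbddB
  have hLM : sInf (F '' Ioo c d) ≤ sSup (F '' Ioo c d) := csInf_le_csSup hSne hbddB hbddA
  have hLj : a j ≤ sInf (F '' Ioo c d) := le_csInf hSne fun y hy => (hj hy).1
  have hMj : sSup (F '' Ioo c d) ≤ b j := csSup_le hSne fun y hy => (hj hy).2
  rw [sigmaLap, rightLim, leftLim', hM.limUnder_eq, hL.limUnder_eq,
    omegaPlus_add_omegaMinus_eq_ite horder hcd hi hLM hLj hMj]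
  exact if_congr (exists_fixed_mem_Ioo_iff hcd hcont hanti hM hL).symm rfl rfl

end Components

lemma IsLapOf.eq_of_mem_Ioo {C : Finset ℝ} {Ω : Set ℝ} {c d c' d' x : ℝ}
    (h : IsLapOf C Ω c d) (h' : IsLapOf C Ω c' d')
    (hx : x ∈ Ioo c d) (hx' : x ∈ Ioo c' d') : c = c' ∧ d = d' := by
  have key : ∀ {c₁ d₁ c₂ d₂ : ℝ}, IsLapOf C Ω c₁ d₁ → IsLapOf C Ω c₂ d₂ →
      x ∈ Ioo c₁ d₁ → x ∈ Ioo c₂ d₂ → c₂ ≤ c₁ ∧ d₁ ≤ d₂ := by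
    intro c₁ d₁ c₂ d₂ h₁ h₂ hx₁ hx₂
    constructor
    · by_contra! hlt
      exact h₁.2.2.2.2 c₂ ⟨hlt, hx₂.1.trans hx₁.2⟩ h₂.2.2.1
    · by_contra! hlt
      exact h₁.2.2.2.2 d₂ ⟨hx₁.1.trans hx₂.2, hlt⟩ h₂.2.2.2.1
  exact ⟨le_antisymm (key h' h hx' hx).1 (key h h' hx hx').1,
    le_antisymm (key h h' hx hx').2 (key h' h hx' hx).2⟩

lemma StrictAntiOn.eq_of_fixed {α : Type*} [LinearOrder α] {f : α → α} {s : Set α}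
    (hf : StrictAntiOn f s) {x y : α} (hx : x ∈ s) (hy : y ∈ s) (hfx : f x = x)
    (hfy : f y = y) : x = y := by
  by_contra hne
  rcases lt_or_gt_of_ne hne with h | h
  · exact lt_asymm h (hfx ▸ hfy ▸ hf hx hy h)
  · exact lt_asymm h (hfx ▸ hfy ▸ hf hy hx h)

lemma card_filter_decreasing_laps_with_fixed_eq_ncard (C : Finset ℝ) (Ω : Set ℝ)
    (F : ℝ → ℝ) :
    #{q ∈ C ×ˢ C | IsLapOf C Ω q.1 q.2 ∧ StrictAntiOn F (Ioo q.1 q.2) ∧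
        ∃ x ∈ Ioo q.1 q.2, F x = x} =
      {x : ℝ | x ∈ Ω \ (C : Set ℝ) ∧ F x = x ∧
        ∃ c d : ℝ, IsLapOf C Ω c d ∧ x ∈ Ioo c d ∧ StrictAntiOn F (Ioo c d)}.ncard := by
  rw [← Set.ncard_coe_finset]
  refine Set.ncard_congr (fun q hq => (Finset.mem_filter.mp hq).2.2.2.choose) ?_ ?_ ?_
  · intro q hq
    obtain ⟨hlap, hanti, hfix⟩ := (Finset.mem_filter.mp hq).2
    obtain ⟨hx, hFx⟩ := hfix.choose_spec
    exact ⟨⟨hlap.2.1 (Ioo_subset_Icc_self hx), hlap.2.2.2.2 _ hx⟩, hFx, q.1, q.2, hlap, hx,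
      hanti⟩
  · intro q q' hq hq' heq
    obtain ⟨hx, -⟩ := (Finset.mem_filter.mp hq).2.2.2.choose_spec
    obtain ⟨hx', -⟩ := (Finset.mem_filter.mp hq').2.2.2.choose_spec
    obtain ⟨h₁, h₂⟩ := (Finset.mem_filter.mp hq).2.1.eq_of_mem_Ioo
      (Finset.mem_filter.mp hq').2.1 (heq ▸ hx) hx'
    exact Prod.ext h₁ h₂
  · rintro x ⟨-, hFx, c, d, hlap, hx, hanti⟩
    have hq : (c, d) ∈ {q ∈ C ×ˢ C | IsLapOf C Ω q.1 q.2 ∧ StrictAntiOn F (Ioo q.1 q.2) ∧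
        ∃ x ∈ Ioo q.1 q.2, F x = x} :=
      Finset.mem_filter.mpr
        ⟨Finset.mem_product.mpr ⟨hlap.2.2.1, hlap.2.2.2.1⟩, hlap, hanti, x, hx, hFx⟩
    obtain ⟨hy, hFy⟩ := (Finset.mem_filter.mp hq).2.2.2.choose_spec
    exact ⟨(c, d), hq, hanti.eq_of_fixed hy hx hFy hFx⟩

theorem sigma_decreasing_laps_count_neg_fixed_points_general
    (m : ℕ) (a b : Fin m → ℝ)
    (horder : ∀ i j : Fin m, i < j → b i < a j)
    (C : Finset ℝ)
    (F : ℝ → ℝ)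
    (hmaps : ∀ x ∈ (⋃ j, Set.Icc (a j) (b j)) \ (C : Set ℝ),
      F x ∈ ⋃ j, Set.Icc (a j) (b j))
    (hpm : ∀ c d : ℝ, IsLapOf C (⋃ j, Set.Icc (a j) (b j)) c d →
      ContinuousOn F (Set.Ioo c d) ∧
      (StrictMonoOn F (Set.Ioo c d) ∨ StrictAntiOn F (Set.Ioo c d))) :
    (∀ c d : ℝ, IsLapOf C (⋃ j, Set.Icc (a j) (b j)) c d →
      StrictAntiOn F (Set.Ioo c d) →
      ((∃ x ∈ Set.Ioo c d, F x = x) → sigmaLap m a b F c d = -1) ∧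
      ((¬ ∃ x ∈ Set.Ioo c d, F x = x) → sigmaLap m a b F c d = 0)) ∧
    (∑ q ∈ C ×ˢ C,
        (if IsLapOf C (⋃ j, Set.Icc (a j) (b j)) q.1 q.2 ∧
            StrictAntiOn F (Set.Ioo q.1 q.2)
          then sigmaLap m a b F q.1 q.2 else 0))
      = -({x : ℝ | x ∈ (⋃ j, Set.Icc (a j) (b j)) \ (C : Set ℝ) ∧ F x = x ∧
            ∃ c d : ℝ, IsLapOf C (⋃ j, Set.Icc (a j) (b j)) c d ∧
              x ∈ Set.Ioo c d ∧ StrictAntiOn F (Set.Ioo c d)}.ncard : ℤ) := by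
  have hsigma : ∀ c d, IsLapOf C (⋃ j, Icc (a j) (b j)) c d → StrictAntiOn F (Ioo c d) →
      sigmaLap m a b F c d = if ∃ x ∈ Ioo c d, F x = x then -1 else 0 :=
    fun c d hlap hanti => sigmaLap_eq_ite horder hmaps hlap (hpm c d hlap).1 hanti.antitoneOn
  refine ⟨fun c d hlap hanti => ?_, ?_⟩
  · rw [hsigma c d hlap hanti]
    exact ⟨fun h => if_pos h, fun h => if_neg h⟩
  · rw [← card_filter_decreasing_laps_with_fixed_eq_ncard, Finset.card_filter, Nat.cast_sum,
      ← Finset.sum_neg_distrib]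
    refine Finset.sum_congr rfl fun q _ => ?_
    by_cases hq : IsLapOf C (⋃ j, Icc (a j) (b j)) q.1 q.2 ∧ StrictAntiOn F (Ioo q.1 q.2)
    · rw [if_pos hq, hsigma q.1 q.2 hq.1 hq.2]
      by_cases hfix : ∃ x ∈ Ioo q.1 q.2, F x = x
      · rw [if_pos hfix, if_pos ⟨hq.1, hq.2, hfix⟩]
        simp
      · rw [if_neg hfix, if_neg fun h => hfix h.2.2]
        simp
    · rw [if_neg hq, if_neg fun h => hq ⟨h.1, h.2.1⟩]
      simp

/-- For a PM map `F` on `Ω` and a decreasing lap `I = [c,d]`,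
`σ(I) = −1` if `F` has a fixed point in `]c,d[` and `σ(I) = 0` otherwise; consequently
`Σ_{I ∈ L_F⁻} σ(I) = −#Fix⁻(F)`, where `Fix⁻(F)` is the set of fixed points of `F` in
`Ω \ C_F` at which `F` is decreasing. -/
theorem sigma_decreasing_laps_count_neg_fixed_points
    (m : ℕ) (a b : Fin m → ℝ)
    (hab : ∀ i, a i < b i)
    (horder : ∀ i j : Fin m, i < j → b i < a j)
    (C : Finset ℝ) (hC : ∀ i, a i ∈ C ∧ b i ∈ C)
    (F : ℝ → ℝ)
    (hmaps : ∀ x ∈ (⋃ j, Set.Icc (a j) (b j)) \ (C : Set ℝ),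
      F x ∈ ⋃ j, Set.Icc (a j) (b j))
    (hpm : ∀ c d : ℝ, IsLapOf C (⋃ j, Set.Icc (a j) (b j)) c d →
      ContinuousOn F (Set.Ioo c d) ∧
      (StrictMonoOn F (Set.Ioo c d) ∨ StrictAntiOn F (Set.Ioo c d))) :
    (∀ c d : ℝ, IsLapOf C (⋃ j, Set.Icc (a j) (b j)) c d →
      StrictAntiOn F (Set.Ioo c d) →
      ((∃ x ∈ Set.Ioo c d, F x = x) → sigmaLap m a b F c d = -1) ∧
      ((¬ ∃ x ∈ Set.Ioo c d, F x = x) → sigmaLap m a b F c d = 0)) ∧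
    (∑ q ∈ C ×ˢ C,
        (if IsLapOf C (⋃ j, Set.Icc (a j) (b j)) q.1 q.2 ∧
            StrictAntiOn F (Set.Ioo q.1 q.2)
          then sigmaLap m a b F q.1 q.2 else 0))
      = -({x : ℝ | x ∈ (⋃ j, Set.Icc (a j) (b j)) \ (C : Set ℝ) ∧ F x = x ∧
            ∃ c d : ℝ, IsLapOf C (⋃ j, Set.Icc (a j) (b j)) c d ∧
              x ∈ Set.Ioo c d ∧ StrictAntiOn F (Set.Ioo c d)}.ncard : ℤ) :=
  sigma_decreasing_laps_count_neg_fixed_points_general m a b horder C F hmaps hpm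
end
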